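/- arXiv:1304.4482 — 5 statements merged into one kernel-verified Lean document; each statement's English description precedes it below -/
import Mathlib

section
/- Let I_1 < I_2 < ... < I_k be disjoint ordered open intervals in R and w_j positive integrable weight functions on I_j with all moments finite. Then the bilinear form on symmetric polynomials in k variables given by <f,g> = integral over I_1 x ... x I_k of f(x)g(x) prod_{i<i'}(x_{i'}-x_i) prod_j w_j(x_j) dx is positive definite. -/
/-!
The Vandermonde factor `∏_{i<i'} (x_{i'} - x_i)` is positive on the box `I_1 × ⋯ × I_k` because
the intervals are ordered, so the integrand `f² · V · ∏ w_j` is nonnegative there. It is integrable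
because, expanded into monomials, it is a combination of products of one-variable moments. It is
strictly positive on the open set where `f ≠ 0`, which meets the box since a nonzero polynomial
cannot vanish on a product of infinite sets.
-/

open MeasureTheory Set

lemma MvPolynomial.exists_mem_pi_eval_ne_zero {R σ : Type*} [CommRing R] [IsDomain R]
    {s : σ → Set R} (hs : ∀ i, (s i).Infinite) {p : MvPolynomial σ R} (hp : p ≠ 0) :
    ∃ x ∈ univ.pi s, MvPolynomial.eval x p ≠ 0 := by
  by_contra! h
  exact hp (MvPolynomial.funext_set s hs fun x hx => by simpa using h x hx)

lemma integrableOn_pow_mul_of_integrableOn_abs_pow_mul {w : ℝ → ℝ} {s : Set ℝ}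
    (hs : MeasurableSet s) (hw : ∀ x ∈ s, 0 ≤ w x)
    (hmom : ∀ m : ℕ, IntegrableOn (fun x => |x| ^ m * w x) s) (m : ℕ) :
    IntegrableOn (fun x => x ^ m * w x) s := by
  have hw_int : IntegrableOn w s := by simpa using hmom 0
  refine (hmom m).mono' ((continuous_pow m).aestronglyMeasurable.mul
    hw_int.aestronglyMeasurable) ((ae_restrict_iff' hs).2 (.of_forall fun x hx => ?_))
  rw [Real.norm_eq_abs, abs_mul, abs_pow, abs_of_nonneg (hw x hx)]

lemma integrableOn_univ_pi_prod {ι α : Type*} [Fintype ι] [MeasurableSpace α]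
    {μ : ι → Measure α} [∀ i, SigmaFinite (μ i)] {s : ι → Set α} {g : ι → α → ℝ}
    (hg : ∀ i, IntegrableOn (g i) (s i) (μ i)) :
    IntegrableOn (fun x : ι → α => ∏ i, g i (x i)) (univ.pi s) (Measure.pi μ) := by
  rw [IntegrableOn, Measure.restrict_pi_pi]
  exact Integrable.fintype_prod hg

lemma integrableOn_eval_mul_prod {ι : Type*} [Fintype ι] {s : ι → Set ℝ} {w : ι → ℝ → ℝ}
    (hw : ∀ i (m : ℕ), IntegrableOn (fun x => x ^ m * w i x) (s i))
    (P : MvPolynomial ι ℝ) :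
    IntegrableOn (fun x : ι → ℝ => MvPolynomial.eval x P * ∏ i, w i (x i)) (univ.pi s) := by
  have hmonomial (d : ι →₀ ℕ) :
      IntegrableOn (fun x : ι → ℝ => ∏ i, (x i ^ d i * w i (x i))) (univ.pi s) :=
    integrableOn_univ_pi_prod fun i => hw i (d i)
  have hexpand (x : ι → ℝ) : MvPolynomial.eval x P * ∏ i, w i (x i) =
      ∑ d ∈ P.support, P.coeff d * ∏ i, (x i ^ d i * w i (x i)) := by
    simp only [MvPolynomial.eval_eq', Finset.sum_mul, Finset.prod_mul_distrib, mul_assoc]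
  simp_rw [hexpand]
  exact integrable_finsetSum _ fun d _ => (hmonomial d).const_mul _

lemma prod_sub_pos_of_mem_pi_Ioo {ι : Type*} [Fintype ι] [LinearOrder ι] {a b : ι → ℝ}
    (hord : ∀ i i', i < i' → b i ≤ a i') {x : ι → ℝ}
    (hx : x ∈ univ.pi fun i => Ioo (a i) (b i)) :
    0 < ∏ p ∈ Finset.univ.filter (fun p : ι × ι => p.1 < p.2), (x p.2 - x p.1) := by
  refine Finset.prod_pos fun p hp => ?_
  have hlt : p.1 < p.2 := (Finset.mem_filter.mp hp).2
  linarith [(hx p.1 (mem_univ _)).2, (hx p.2 (mem_univ _)).1, hord p.1 p.2 hlt]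

lemma setIntegral_pos_of_pos_on_isOpen {X : Type*} [TopologicalSpace X] [MeasurableSpace X]
    {μ : Measure X} [μ.IsOpenPosMeasure] {g : X → ℝ} {S U : Set X} (hS : MeasurableSet S)
    (hg : IntegrableOn g S μ) (hg_nonneg : ∀ x ∈ S, 0 ≤ g x)
    (hU : IsOpen U) (hU_ne : U.Nonempty) (hUS : U ⊆ S) (hg_pos : ∀ x ∈ U, 0 < g x) :
    0 < ∫ x in S, g x ∂μ := by
  rw [setIntegral_pos_iff_support_of_nonneg_ae
    ((ae_restrict_iff' hS).2 (.of_forall hg_nonneg)) hg]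
  exact (hU.measure_pos μ hU_ne).trans_le
    (measure_mono fun x hx => ⟨(hg_pos x hx).ne', hUS hx⟩)

theorem stmt2_general (k : ℕ) (a b : Fin k → ℝ) (hab : ∀ j, a j < b j)
    (hord : ∀ i i' : Fin k, i < i' → b i ≤ a i')
    (w : Fin k → ℝ → ℝ)
    (hwpos : ∀ j, ∀ x ∈ Set.Ioo (a j) (b j), 0 < w j x)
    (hwint : ∀ (j : Fin k) (m : ℕ),
      IntegrableOn (fun x => |x| ^ m * w j x) (Set.Ioo (a j) (b j)) volume)
    (f : MvPolynomial (Fin k) ℝ) (hf0 : f ≠ 0) :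
    0 < ∫ x : Fin k → ℝ in Set.univ.pi (fun j => Set.Ioo (a j) (b j)),
        (MvPolynomial.eval x f) ^ 2 *
          (∏ p ∈ Finset.univ.filter (fun p : Fin k × Fin k => p.1 < p.2),
            (x p.2 - x p.1)) *
          ∏ j, w j (x j) := by
  set box := univ.pi fun j => Ioo (a j) (b j)
  have hV (x) (hx : x ∈ box) := prod_sub_pos_of_mem_pi_Ioo hord hx
  have hW (x) (hx : x ∈ box) : 0 < ∏ j, w j (x j) :=
    Finset.prod_pos fun j _ => hwpos j (x j) (hx j (mem_univ j))
  have hint := integrableOn_eval_mul_prod (s := fun j => Ioo (a j) (b j))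
    (fun j => integrableOn_pow_mul_of_integrableOn_abs_pow_mul measurableSet_Ioo
      (fun x hx => (hwpos j x hx).le) (hwint j))
    (f ^ 2 * ∏ p ∈ Finset.univ.filter (fun p : Fin k × Fin k => p.1 < p.2),
      (MvPolynomial.X p.2 - MvPolynomial.X p.1))
  simp only [map_mul, map_pow, map_prod, map_sub, MvPolynomial.eval_X] at hint
  have hU_open : IsOpen (box ∩ {x | MvPolynomial.eval x f ≠ 0}) :=
    (isOpen_set_pi finite_univ fun _ _ => isOpen_Ioo).inter
      (isOpen_ne.preimage (MvPolynomial.continuous_eval f))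
  have hU_ne : (box ∩ {x | MvPolynomial.eval x f ≠ 0}).Nonempty :=
    MvPolynomial.exists_mem_pi_eval_ne_zero (fun j => Ioo_infinite (hab j)) hf0
  exact setIntegral_pos_of_pos_on_isOpen (MeasurableSet.univ_pi fun _ => measurableSet_Ioo)
    hint (fun x hx => by positivity [hV x hx, hW x hx]) hU_open hU_ne inter_subset_left
    fun x ⟨hx, hfx⟩ => mul_pos (mul_pos (pow_two_pos_of_ne_zero hfx) (hV x hx)) (hW x hx)

theorem stmt2 (k : ℕ) (a b : Fin k → ℝ) (hab : ∀ j, a j < b j)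
    (hord : ∀ i i' : Fin k, i < i' → b i ≤ a i')
    (w : Fin k → ℝ → ℝ)
    (hwpos : ∀ j, ∀ x ∈ Set.Ioo (a j) (b j), 0 < w j x)
    (hwint : ∀ (j : Fin k) (m : ℕ),
      IntegrableOn (fun x => |x| ^ m * w j x) (Set.Ioo (a j) (b j)) volume)
    (f : MvPolynomial (Fin k) ℝ) (hf : f.IsSymmetric) (hf0 : f ≠ 0) :
    0 < ∫ x : Fin k → ℝ in Set.univ.pi (fun j => Set.Ioo (a j) (b j)),
        (MvPolynomial.eval x f) ^ 2 *
          (∏ p ∈ Finset.univ.filter (fun p : Fin k × Fin k => p.1 < p.2),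
            (x p.2 - x p.1)) *
          ∏ j, w j (x j) :=
  stmt2_general k a b hab hord w hwpos hwint f hf0
end

section
/- Let E_alpha, E_beta be two polynomial solutions of the Heine-Stieltjes equation prod_{i=0}^k (x-e_i) y'' + sum_{j=0}^k m_j prod_{i != j} (x-e_i) y' + V(x) y = 0 with distinct van Vleck polynomials V_alpha, V_beta. Then for every j in {1,...,k}, <E_alpha, (V_alpha - V_beta) E_beta>_j = 0, where <f,g>_j = integral from e_{j-1} to e_j of f g w with w(x) = prod_i |x - e_i|^{m_i - 1}. -/
open Polynomial MeasureTheory Set Filter Topology Finset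

/-!
Write `Q = ∏ (X - e i)`, `P = ∑ m j ∏_{i ≠ j} (X - e i)` and `w x = ∏ |x - e i| ^ (m i - 1)`.
Away from the nodes, `ρ x = ∏ (x - e i) |x - e i| ^ (m i - 1) = Q x * w x` has `ρ' = P w`, so
`(p ρ)' = (Q p' + P p) w` for every polynomial `p`. For the Wronskian `W = Eα Eβ' - Eα' Eβ` the
two equations give `Q W' + P W = (Vα - Vβ) Eα Eβ`, so the integrand is `(W ρ)'`. As all `m i > 0`,
`W ρ` is continuous and vanishes at every node, and the fundamental theorem of calculus on
`(e (j-1), e j)` gives `0`.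
-/

theorem abs_mul_abs_rpow_sub_one {q : ℝ} (hq : q ≠ 0) (y : ℝ) : |y| * |y| ^ (q - 1) = |y| ^ q := by
  rw [mul_comm, ← Real.rpow_add_one' (abs_nonneg y) (by simpa using hq), sub_add_cancel]

theorem hasDerivAt_mul_abs_rpow_sub_one {x : ℝ} (hx : x ≠ 0) (q : ℝ) :
    HasDerivAt (fun y => y * |y| ^ (q - 1)) (q * |x| ^ (q - 1)) x := by
  refine ((hasDerivAt_id x).mul
    ((hasDerivAt_abs hx).rpow_const (p := q - 1) (Or.inl (abs_pos.2 hx).ne'))).congr_deriv ?_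
  have hx' : |x| ≠ 0 := abs_ne_zero.2 hx
  have key : x * SignType.sign x * |x| ^ (q - 1 - 1) = |x| ^ (q - 1) := by
    rw [self_mul_sign, Real.rpow_sub_one hx', mul_div_cancel₀ _ hx']
  rw [id]
  linear_combination (q - 1) * key

theorem continuous_mul_abs_rpow_sub_one {q : ℝ} (hq : 0 < q) :
    Continuous fun y : ℝ => y * |y| ^ (q - 1) := by
  refine continuous_iff_continuousAt.2 fun x => ?_
  rcases eq_or_ne x 0 with rfl | hx
  · have hnorm (y : ℝ) : ‖y * |y| ^ (q - 1)‖ = |y| ^ q := by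
      rw [Real.norm_eq_abs, abs_mul, abs_of_nonneg (Real.rpow_nonneg (abs_nonneg y) _),
        abs_mul_abs_rpow_sub_one hq.ne']
    have hpow : Tendsto (fun y : ℝ => |y| ^ q) (𝓝 0) (𝓝 0) := by
      simpa [Real.zero_rpow hq.ne'] using
        (continuous_abs.rpow_const fun _ => Or.inr hq.le).tendsto (0 : ℝ)
    simpa [ContinuousAt] using squeeze_zero_norm (fun y => (hnorm y).le) hpow
  · exact (hasDerivAt_mul_abs_rpow_sub_one hx q).continuousAt

theorem hasDerivAt_prod_sub_mul_abs_rpow {ι : Type*} [Fintype ι] [DecidableEq ι] (e m : ι → ℝ)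
    {x : ℝ} (hx : ∀ i, x ≠ e i) :
    HasDerivAt (fun y => ∏ i, (y - e i) * |y - e i| ^ (m i - 1))
      ((∑ j, m j * ∏ i ∈ univ.erase j, (x - e i)) * ∏ i, |x - e i| ^ (m i - 1)) x := by
  have hfactor (i : ι) : HasDerivAt (fun y => (y - e i) * |y - e i| ^ (m i - 1))
      (m i * |x - e i| ^ (m i - 1)) x :=
    (hasDerivAt_mul_abs_rpow_sub_one (sub_ne_zero.2 (hx i)) (m i)).comp_sub_const x (e i)
  refine (HasDerivAt.fun_finsetProd fun i _ => hfactor i).congr_deriv ?_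
  rw [sum_mul]
  refine sum_congr rfl fun j _ => ?_
  rw [smul_eq_mul, prod_mul_distrib,
    ← prod_erase_mul _ (fun i => |x - e i| ^ (m i - 1)) (mem_univ j)]
  ring

theorem hasDerivAt_eval_mul_prod_sub_mul_abs_rpow {ι : Type*} [Fintype ι] [DecidableEq ι]
    (e m : ι → ℝ) (p : ℝ[X]) {x : ℝ} (hx : ∀ i, x ≠ e i) :
    HasDerivAt (fun y => p.eval y * ∏ i, (y - e i) * |y - e i| ^ (m i - 1))
      (((∏ i, (X - C (e i))) * p.derivative +
          (∑ j, C (m j) * ∏ i ∈ univ.erase j, (X - C (e i))) * p).eval x *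
        ∏ i, |x - e i| ^ (m i - 1)) x := by
  refine ((p.hasDerivAt x).mul (hasDerivAt_prod_sub_mul_abs_rpow e m hx)).congr_deriv ?_
  simp only [eval_add, eval_mul, eval_prod, eval_finsetSum, eval_sub, eval_X, eval_C,
    prod_mul_distrib]
  ring

theorem integral_Ioo_eq_zero_of_hasDerivAt {f G : ℝ → ℝ} {a b : ℝ} (hab : a ≤ b)
    (hG : ContinuousOn G (Icc a b)) (hGab : G a = G b)
    (hderiv : ∀ x ∈ Ioo a b, HasDerivAt G (f x) x) : ∫ x in Ioo a b, f x = 0 := by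
  by_cases hf : IntegrableOn f (Ioo a b)
  · rw [← integral_Ioc_eq_integral_Ioo, ← intervalIntegral.integral_of_le hab,
      intervalIntegral.integral_eq_sub_of_hasDerivAt_of_le hab hG hderiv
        ((intervalIntegrable_iff_integrableOn_Ioo_of_le hab).2 hf), hGab, sub_self]
  · exact integral_undef hf

theorem mul_derivative_wronskian_add_mul_wronskian {R : Type*} [CommRing R]
    {Q P Va Vb Ea Eb : R[X]}
    (ha : Q * Ea.derivative.derivative + P * Ea.derivative + Va * Ea = 0)
    (hb : Q * Eb.derivative.derivative + P * Eb.derivative + Vb * Eb = 0) :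
    Q * (wronskian Ea Eb).derivative + P * wronskian Ea Eb = (Va - Vb) * Ea * Eb := by
  simp only [wronskian, derivative_sub, derivative_mul]
  linear_combination Ea * hb - Eb * ha

theorem Fin.ne_of_mem_Ioo_castSucc_succ {α : Type*} [Preorder α] {k : ℕ} {e : Fin (k + 1) → α}
    (he : Monotone e) {j : Fin k} {x : α} (hx : x ∈ Ioo (e j.castSucc) (e j.succ))
    (i : Fin (k + 1)) : x ≠ e i := by
  rcases le_or_gt i j.castSucc with hi | hi
  · exact ((he hi).trans_lt hx.1).ne'
  · exact (hx.2.trans_le (he (Fin.castSucc_lt_iff_succ_le.1 hi))).ne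

theorem stmt5_general (k : ℕ) (e : Fin (k + 1) → ℝ) (he : StrictMono e)
    (m : Fin (k + 1) → ℝ) (hm : ∀ i, 0 < m i)
    (Ea Eb Va Vb : Polynomial ℝ)
    (ha : (∏ i, (X - C (e i))) * Ea.derivative.derivative +
        (∑ j, C (m j) * ∏ i ∈ Finset.univ.erase j, (X - C (e i))) * Ea.derivative +
        Va * Ea = 0)
    (hb : (∏ i, (X - C (e i))) * Eb.derivative.derivative +
        (∑ j, C (m j) * ∏ i ∈ Finset.univ.erase j, (X - C (e i))) * Eb.derivative +
        Vb * Eb = 0) :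
    ∀ j : Fin k,
      ∫ x in Set.Ioo (e j.castSucc) (e j.succ),
        Ea.eval x * ((Va - Vb).eval x * Eb.eval x) *
          ∏ i, |x - e i| ^ (m i - 1) = 0 := by
  intro j
  set G : ℝ → ℝ := fun y => (wronskian Ea Eb).eval y * ∏ i, (y - e i) * |y - e i| ^ (m i - 1)
  have hG : Continuous G := (wronskian Ea Eb).continuous.mul <| continuous_finsetProd _
    fun i _ => (continuous_mul_abs_rpow_sub_one (hm i)).comp (continuous_sub_right (e i))
  have hG_node (i : Fin (k + 1)) : G (e i) = 0 := by
    simp only [G]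
    rw [prod_eq_zero (mem_univ i) (by rw [sub_self, zero_mul]), mul_zero]
  refine integral_Ioo_eq_zero_of_hasDerivAt (he Fin.castSucc_lt_succ).le hG.continuousOn
    (by rw [hG_node, hG_node]) fun x hx => ?_
  refine (hasDerivAt_eval_mul_prod_sub_mul_abs_rpow e m _
    (Fin.ne_of_mem_Ioo_castSucc_succ he.monotone hx)).congr_deriv ?_
  rw [mul_derivative_wronskian_add_mul_wronskian ha hb, eval_mul, eval_mul]
  ring

theorem stmt5 (k : ℕ) (e : Fin (k + 1) → ℝ) (he : StrictMono e)
    (m : Fin (k + 1) → ℝ) (hm : ∀ i, 0 < m i)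
    (Ea Eb Va Vb : Polynomial ℝ)
    (ha : (∏ i, (X - C (e i))) * Ea.derivative.derivative +
        (∑ j, C (m j) * ∏ i ∈ Finset.univ.erase j, (X - C (e i))) * Ea.derivative +
        Va * Ea = 0)
    (hb : (∏ i, (X - C (e i))) * Eb.derivative.derivative +
        (∑ j, C (m j) * ∏ i ∈ Finset.univ.erase j, (X - C (e i))) * Eb.derivative +
        Vb * Eb = 0)
    (hV : Va ≠ Vb) :
    ∀ j : Fin k,
      ∫ x in Set.Ioo (e j.castSucc) (e j.succ),
        Ea.eval x * ((Va - Vb).eval x * Eb.eval x) *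
          ∏ i, |x - e i| ^ (m i - 1) = 0 :=
  stmt5_general k e he m hm Ea Eb Va Vb ha hb
end

section
/- Let E_1, ..., E_N be real polynomials of degree n such that the symmetric polynomials E_alpha^{(k-1)}(x_1,...,x_{k-1}) = E_alpha(x_1) ... E_alpha(x_{k-1}) are linearly independent. Suppose p is a polynomial of degree n with p^{(k)} = sum_alpha lambda_alpha E_alpha^{(k)}. Then lambda_alpha = 0 for every alpha such that E_alpha is not proportional to p. (Rank-one uniqueness.) -/
/-!
Write `q^{(m)} = q(x₀) ⋯ q(x_{m-1})` (`Polynomial.outerPow`). Specialising the last variable of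
`p^{(k)} = ∑ λ_α E_α^{(k)}` to a real number `a` gives `p(a) p^{(k-1)} = ∑ λ_α E_α(a) E_α^{(k-1)}`.
Comparing the identities at two points `a`, `b` (each scaled by the other's value of `p`) and using
the linear independence of the `E_α^{(k-1)}` yields `λ_α (p(b) E_α(a) - p(a) E_α(b)) = 0`, so `E_α`
and `p` are proportional as functions whenever `λ_α ≠ 0`. If `p = 0`, the specialised identity
directly forces `λ_α E_α(a) = 0`.
-/

open Polynomial

namespace Polynomial

noncomputable def outerPow {R : Type*} [CommSemiring R] (q : R[X]) (m : ℕ) :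
    MvPolynomial (Fin m) R :=
  ∏ i : Fin m, aeval (MvPolynomial.X i) q

theorem aeval_lastCases_outerPow {R : Type*} [CommSemiring R] (q : R[X]) (m : ℕ) (a : R) :
    MvPolynomial.aeval (Fin.lastCases (MvPolynomial.C a) MvPolynomial.X) (q.outerPow (m + 1)) =
      q.eval a • q.outerPow m := by
  simp only [outerPow, map_prod, ← aeval_algHom_apply (MvPolynomial.aeval _), MvPolynomial.aeval_X]
  simp only [Fin.prod_univ_castSucc, Fin.lastCases_castSucc, Fin.lastCases_last]
  rw [← MvPolynomial.algebraMap_eq, aeval_algebraMap_apply_eq_algebraMap_eval,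
    MvPolynomial.algebraMap_eq, mul_comm, MvPolynomial.smul_eq_C_mul]

theorem exists_eq_smul_of_eval_mul_comm {K : Type*} [Field K] [Infinite K] {p q : K[X]}
    (hp : p ≠ 0) (h : ∀ a b, p.eval b * q.eval a = p.eval a * q.eval b) : ∃ c : K, q = c • p := by
  obtain ⟨b, hb⟩ : ∃ b, p.eval b ≠ 0 := by
    by_contra! hzero
    exact hp (Polynomial.funext fun a => by simp [hzero a])
  refine ⟨q.eval b / p.eval b, Polynomial.funext fun a => ?_⟩
  rw [eval_smul, smul_eq_mul, div_mul_eq_mul_div, eq_div_iff hb]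
  linear_combination h a b

end Polynomial

theorem LinearIndependent.mul_coord_comm {ι R M : Type*} [Fintype ι] [CommRing R]
    [AddCommGroup M] [Module R M] {v : ι → M} (hv : LinearIndependent R v) {w : M} {s t : R}
    {f g : ι → R} (hf : s • w = ∑ i, f i • v i) (hg : t • w = ∑ i, g i • v i) (i : ι) :
    t * f i = s * g i := by
  refine hv.eq_coords_of_eq (f := fun i => t * f i) (g := fun i => s * g i) ?_ i
  simp only [← smul_smul, ← Finset.smul_sum, ← hf, ← hg, smul_comm t s]

theorem stmt13_general (k N : ℕ) (hk : 1 ≤ k)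
    (E : Fin N → Polynomial ℝ)
    (hind : LinearIndependent ℝ (fun α : Fin N =>
      ∏ i : Fin (k - 1),
        Polynomial.aeval (MvPolynomial.X i : MvPolynomial (Fin (k - 1)) ℝ) (E α)))
    (p : Polynomial ℝ) (lam : Fin N → ℝ)
    (hsum : (∏ i : Fin k,
        Polynomial.aeval (MvPolynomial.X i : MvPolynomial (Fin k) ℝ) p) =
      ∑ α, lam α • ∏ i : Fin k,
        Polynomial.aeval (MvPolynomial.X i : MvPolynomial (Fin k) ℝ) (E α)) :
    ∀ α, lam α ≠ 0 → ∃ c : ℝ, E α = c • p := by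
  obtain ⟨m, rfl⟩ : ∃ m, k = m + 1 := ⟨k - 1, (Nat.succ_pred_eq_of_pos hk).symm⟩
  change LinearIndependent ℝ fun α => (E α).outerPow m at hind
  change p.outerPow (m + 1) = ∑ α, lam α • (E α).outerPow (m + 1) at hsum
  have hspec (a : ℝ) :
      p.eval a • p.outerPow m = ∑ α, (lam α * (E α).eval a) • (E α).outerPow m := by
    have h := congrArg (MvPolynomial.aeval (Fin.lastCases (MvPolynomial.C a) MvPolynomial.X)) hsum
    simpa only [aeval_lastCases_outerPow, map_sum, map_smul, smul_smul] using h
  intro α hα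
  by_cases hp : p = 0
  · refine ⟨0, Polynomial.funext fun a => ?_⟩
    have h := Fintype.linearIndependent_iff.mp hind _ (by simpa [hp] using (hspec a).symm) α
    simpa [hp, hα] using h
  · refine exists_eq_smul_of_eval_mul_comm hp fun a b => mul_left_cancel₀ hα ?_
    linear_combination hind.mul_coord_comm (hspec a) (hspec b) α

theorem stmt13 (k n N : ℕ) (hk : 1 ≤ k)
    (E : Fin N → Polynomial ℝ) (hdeg : ∀ α, (E α).natDegree = n)
    (hind : LinearIndependent ℝ (fun α : Fin N =>
      ∏ i : Fin (k - 1),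
        Polynomial.aeval (MvPolynomial.X i : MvPolynomial (Fin (k - 1)) ℝ) (E α)))
    (p : Polynomial ℝ) (hp : p.natDegree = n) (lam : Fin N → ℝ)
    (hsum : (∏ i : Fin k,
        Polynomial.aeval (MvPolynomial.X i : MvPolynomial (Fin k) ℝ) p) =
      ∑ α, lam α • ∏ i : Fin k,
        Polynomial.aeval (MvPolynomial.X i : MvPolynomial (Fin k) ℝ) (E α)) :
    ∀ α, lam α ≠ 0 → ∃ c : ℝ, E α = c • p :=
  stmt13_general k N hk E hind p lam hsum
end

section
/- Over an inner product space V_n^k of symmetric polynomials, suppose {E_alpha}_alpha and {E'_alpha}_alpha are two families of degree-n polynomials such that both families {E_alpha^{(k)}} and {(E'_alpha)^{(k)}} are bases of the orthogonal complement of V_{n-1}^k in V_n^k. Then the two families coincide up to permutation and rescaling of their members. -/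
open MvPolynomial

/-!
Taking the coefficient of `x₁ⁿ` sends `p^{(k+1)}` to `(coeff p n) • p^{(k)}`. On
`V_n^{k+1} ∩ (V_{n-1}^{k+1})^⊥` this map is injective: a symmetric polynomial whose `x₁ⁿ`
coefficient vanishes has degree `< n` in every variable, so it lies in `V_{n-1}^{k+1}` and is
orthogonal to itself. Hence the `E_α^{(k)}` are linearly independent. Now write
`E'^{(k+1)} = ∑ c_β E_β^{(k+1)}` and compare the coefficients of every power `x₁ʲ`: independence
of the `E_β^{(k)}` gives `coeff E' j * d_β = c_β * coeff E_β j` for fixed `d_β`, so `E'` is a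
multiple of some `E_β`. Distinct `E'_α` cannot be multiples of the same `E_β`, because
proportional polynomials have proportional `k`-th tensor powers.
-/

/-- `V_n^k`: the space of symmetric polynomials in `k` variables whose degree in
each variable is at most `n`. -/
noncomputable def symDegLE (k n : ℕ) : Submodule ℝ (MvPolynomial (Fin k) ℝ) where
  carrier := {p | p.IsSymmetric ∧ ∀ i, p.degreeOf i ≤ n}
  add_mem' := fun hp hq => ⟨hp.1.add hq.1, fun i =>
    le_trans (MvPolynomial.degreeOf_add_le i _ _) (max_le (hp.2 i) (hq.2 i))⟩
  zero_mem' := ⟨fun e => by simp, fun i => by simp⟩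
  smul_mem' := fun c p hp => ⟨hp.1.smul c, fun i => by
    rw [MvPolynomial.smul_eq_C_mul]
    exact le_trans (MvPolynomial.degreeOf_C_mul_le p i c) (hp.2 i)⟩

-- The paper's `p^{(k)}`.
noncomputable def tensorPow {R : Type*} [CommSemiring R] (k : ℕ) (p : Polynomial R) :
    MvPolynomial (Fin k) R :=
  ∏ i, Polynomial.aeval (X i) p

-- For `j = n` this stands in for the paper's `dⁿ/dx_kⁿ` (up to the factor `n!`, and taken in the
-- first variable): on degree-`n` polynomials both read off the top coefficient.
noncomputable def finSuccCoeff (R : Type*) [CommSemiring R] (k j : ℕ) :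
    MvPolynomial (Fin (k + 1)) R →ₗ[R] MvPolynomial (Fin k) R :=
  (Polynomial.lcoeff (MvPolynomial (Fin k) R) j).restrictScalars R ∘ₗ
    (finSuccEquiv R k).toLinearMap

section tensorPow

variable {R : Type*}

theorem finSuccCoeff_apply [CommSemiring R] (k j : ℕ) (q : MvPolynomial (Fin (k + 1)) R) :
    finSuccCoeff R k j q = ((finSuccEquiv R k) q).coeff j := rfl

theorem tensorPow_smul [CommSemiring R] (k : ℕ) (c : R) (p : Polynomial R) :
    tensorPow k (c • p) = c ^ k • tensorPow k p := by
  simp only [tensorPow, map_smul, ← Finset.smul_prod, Finset.card_univ, Fintype.card_fin]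

theorem tensorPow_ne_zero [CommRing R] [IsDomain R] (k : ℕ) {p : Polynomial R} (hp : p ≠ 0) :
    tensorPow k p ≠ 0 :=
  Finset.prod_ne_zero_iff.2 fun i _ ↦
    (map_ne_zero_iff _ (Polynomial.toMvPolynomial_injective i)).2 hp

theorem finSuccEquiv_tensorPow [CommSemiring R] (k : ℕ) (p : Polynomial R) :
    finSuccEquiv R k (tensorPow (k + 1) p) =
      p.map (algebraMap R (MvPolynomial (Fin k) R)) * Polynomial.C (tensorPow k p) := by
  rw [tensorPow, Fin.prod_univ_succ, map_mul, map_prod, ← Polynomial.aeval_algHom_apply,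
    finSuccEquiv_X_zero, tensorPow, map_prod]
  congr 1
  refine Finset.prod_congr rfl fun i _ ↦ ?_
  rw [← Polynomial.aeval_algHom_apply, finSuccEquiv_X_succ]
  exact Polynomial.aeval_algHom_apply Polynomial.CAlgHom (X i) p

theorem finSuccCoeff_tensorPow [CommSemiring R] (k j : ℕ) (p : Polynomial R) :
    finSuccCoeff R k j (tensorPow (k + 1) p) = p.coeff j • tensorPow k p := by
  rw [finSuccCoeff_apply, finSuccEquiv_tensorPow, Polynomial.coeff_mul_C, Polynomial.coeff_map,
    MvPolynomial.algebraMap_eq, smul_eq_C_mul]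

end tensorPow

theorem MvPolynomial.IsSymmetric.degreeOf_eq {R σ : Type*} [CommSemiring R]
    {p : MvPolynomial σ R} (hp : p.IsSymmetric) (i j : σ) : p.degreeOf i = p.degreeOf j := by
  classical
  have h := degreeOf_rename_of_injective (p := p) (Equiv.swap i j).injective i
  rwa [hp, Equiv.swap_apply_left, eq_comm] at h

theorem LinearIndependent.of_smul {K M ι : Type*} [DivisionRing K] [AddCommGroup M] [Module K M]
    {a : ι → K} {v : ι → M} (h : LinearIndependent K fun i ↦ a i • v i) :
    LinearIndependent K v := by
  have ha : ∀ i, a i ≠ 0 := fun i hi ↦ h.ne_zero i (by simp [hi])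
  exact (LinearIndependent.units_smul_iff v fun i ↦ Units.mk0 (a i) (ha i)).1 h

theorem LinearMap.BilinForm.eq_zero_of_mem_orthogonal_of_mem {R M : Type*} [CommRing R]
    [PartialOrder R] [AddCommGroup M] [Module R M] {B : LinearMap.BilinForm R M}
    {P S : Submodule R M} (hpos : ∀ f ∈ P, f ≠ 0 → 0 < B f f) {w : M}
    (hw : w ∈ P ⊓ B.orthogonal S) (hS : w ∈ S) : w = 0 := by
  by_contra hw0
  exact (hpos w hw.1 hw0).ne' (hw.2 w hS)

section symDegLE

variable {k n : ℕ} {B : LinearMap.BilinForm ℝ (MvPolynomial (Fin (k + 1)) ℝ)}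

theorem mem_symDegLE_pred_of_finSuccCoeff_eq_zero {w : MvPolynomial (Fin (k + 1)) ℝ}
    (hw : w ∈ symDegLE (k + 1) n) (h : finSuccCoeff ℝ k n w = 0) :
    w ∈ symDegLE (k + 1) (n - 1) := by
  have h₀ : w.degreeOf 0 ≤ n - 1 := by
    rw [← natDegree_finSuccEquiv]
    exact Polynomial.natDegree_le_pred (by rw [natDegree_finSuccEquiv]; exact hw.2 0) h
  exact ⟨hw.1, fun i ↦ hw.1.degreeOf_eq i 0 ▸ h₀⟩

theorem disjoint_inf_orthogonal_ker_finSuccCoeff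
    (hBpos : ∀ f ∈ symDegLE (k + 1) n, f ≠ 0 → 0 < B f f) :
    Disjoint (symDegLE (k + 1) n ⊓ B.orthogonal (symDegLE (k + 1) (n - 1)))
      (LinearMap.ker (finSuccCoeff ℝ k n)) :=
  Submodule.disjoint_def.2 fun _ hw hker ↦ B.eq_zero_of_mem_orthogonal_of_mem hBpos hw
    (mem_symDegLE_pred_of_finSuccCoeff_eq_zero hw.1 hker)

theorem linearIndependent_tensorPow_of_span_le {ι : Type*} {E : ι → Polynomial ℝ}
    (hBpos : ∀ f ∈ symDegLE (k + 1) n, f ≠ 0 → 0 < B f f)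
    (hind : LinearIndependent ℝ fun α ↦ tensorPow (k + 1) (E α))
    (hspan : Submodule.span ℝ (Set.range fun α ↦ tensorPow (k + 1) (E α)) ≤
      symDegLE (k + 1) n ⊓ B.orthogonal (symDegLE (k + 1) (n - 1))) :
    LinearIndependent ℝ fun α ↦ tensorPow k (E α) := by
  have h := hind.map ((disjoint_inf_orthogonal_ker_finSuccCoeff hBpos).mono_left hspan)
  simp only [Function.comp_def, finSuccCoeff_tensorPow] at h
  exact h.of_smul

end symDegLE

theorem exists_eq_smul_of_tensorPow_mem_span {K ι : Type*} [Field K] [Fintype ι] {k : ℕ}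
    {E : ι → Polynomial K} (hE : LinearIndependent K fun β ↦ tensorPow k (E β))
    {p : Polynomial K} (hp : p ≠ 0)
    (hmem : tensorPow (k + 1) p ∈ Submodule.span K (Set.range fun β ↦ tensorPow (k + 1) (E β))) :
    ∃ β, ∃ c : K, c ≠ 0 ∧ p = c • E β := by
  obtain ⟨c, hc⟩ := (Submodule.mem_span_range_iff_exists_fun K).1 hmem
  have hcoeff : ∀ j, p.coeff j • tensorPow k p =
      ∑ β, (c β * (E β).coeff j) • tensorPow k (E β) := fun j ↦ by
    simpa only [map_sum, map_smul, finSuccCoeff_tensorPow, smul_smul] using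
      (congrArg (finSuccCoeff K k j) hc).symm
  have hlead : p.coeff p.natDegree ≠ 0 := Polynomial.leadingCoeff_ne_zero.2 hp
  set d : ι → K := fun β ↦ (p.coeff p.natDegree)⁻¹ * (c β * (E β).coeff p.natDegree)
  have hd : tensorPow k p = ∑ β, d β • tensorPow k (E β) := by
    rw [← inv_smul_smul₀ hlead (tensorPow k p), hcoeff, Finset.smul_sum]
    simp only [smul_smul, d]
  have hcd : ∀ β j, p.coeff j * d β = c β * (E β).coeff j := fun β j ↦ by
    refine Fintype.linearIndependent_iffₛ.1 hE (fun β ↦ p.coeff j * d β)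
      (fun β ↦ c β * (E β).coeff j) ?_ β
    rw [← hcoeff, hd, Finset.smul_sum]
    simp only [smul_smul]
  obtain ⟨β, hβ⟩ : ∃ β, d β ≠ 0 := by
    by_contra! h
    exact tensorPow_ne_zero k hp (by simp [hd, h])
  have hpβ : p = ((d β)⁻¹ * c β) • E β := by
    ext j
    rw [Polynomial.coeff_smul, smul_eq_mul, mul_assoc, ← hcd β j]
    field_simp
  exact ⟨β, _, fun h ↦ hp (by rw [hpβ, h, zero_smul]), hpβ⟩

theorem exists_perm_of_forall_exists_eq_smul {K ι : Type*} [Field K] [Finite ι] {k : ℕ}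
    {E E' : ι → Polynomial K} (hE' : LinearIndependent K fun α ↦ tensorPow k (E' α))
    (h : ∀ α, ∃ β, ∃ c : K, c ≠ 0 ∧ E' α = c • E β) :
    ∃ σ : Equiv.Perm ι, ∀ α, ∃ c : K, c ≠ 0 ∧ E' α = c • E (σ α) := by
  choose τ c hc hτ using h
  have hinj : Function.Injective τ := fun α₁ α₂ h ↦
    hE'.eq_of_smul_apply_eq_smul_apply (c α₂ ^ k) (c α₁ ^ k) α₁ α₂ (pow_ne_zero _ (hc α₂)) <| by
      rw [← tensorPow_smul, ← tensorPow_smul, hτ, hτ, h, smul_smul, smul_smul, mul_comm]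
  exact ⟨Equiv.ofBijective τ hinj.bijective_of_finite, fun α ↦ ⟨c α, hc α, hτ α⟩⟩

theorem stmt14_general (k n N : ℕ)
    (B : LinearMap.BilinForm ℝ (MvPolynomial (Fin k) ℝ))
    (hBpos : ∀ f ∈ symDegLE k n, f ≠ 0 → 0 < B f f)
    (E E' : Fin N → Polynomial ℝ)
    (hind : LinearIndependent ℝ (fun α : Fin N =>
      ∏ i : Fin k, Polynomial.aeval (MvPolynomial.X i : MvPolynomial (Fin k) ℝ) (E α)))
    (hspan : Submodule.span ℝ (Set.range (fun α : Fin N =>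
        ∏ i : Fin k, Polynomial.aeval (MvPolynomial.X i : MvPolynomial (Fin k) ℝ) (E α))) =
      symDegLE k n ⊓ B.orthogonal (symDegLE k (n - 1)))
    (hind' : LinearIndependent ℝ (fun α : Fin N =>
      ∏ i : Fin k, Polynomial.aeval (MvPolynomial.X i : MvPolynomial (Fin k) ℝ) (E' α)))
    (hspan' : Submodule.span ℝ (Set.range (fun α : Fin N =>
        ∏ i : Fin k, Polynomial.aeval (MvPolynomial.X i : MvPolynomial (Fin k) ℝ) (E' α))) =
      symDegLE k n ⊓ B.orthogonal (symDegLE k (n - 1))) :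
    ∃ σ : Equiv.Perm (Fin N), ∀ α, ∃ c : ℝ, c ≠ 0 ∧ E' α = c • E (σ α) := by
  obtain _ | k := k
  -- With no variables `V_n^0 = V_{n-1}^0`, so no `E_α^{(0)}` can be nonzero.
  · have : IsEmpty (Fin N) := ⟨fun α ↦ hind.ne_zero α <| by
      have hmem := hspan.le (Submodule.subset_span ⟨α, rfl⟩)
      exact B.eq_zero_of_mem_orthogonal_of_mem hBpos hmem ⟨hmem.1.1, fun i ↦ i.elim0⟩⟩
    exact ⟨1, isEmptyElim⟩
  have hG := linearIndependent_tensorPow_of_span_le hBpos hind hspan.le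
  refine exists_perm_of_forall_exists_eq_smul hind' fun α ↦
    exists_eq_smul_of_tensorPow_mem_span hG (fun h ↦ hind'.ne_zero α ?_) ?_
  · simp [h]
  · exact (hspan'.trans hspan.symm).le (Submodule.subset_span ⟨α, rfl⟩)

theorem stmt14 (k n N : ℕ) (hn : 1 ≤ n)
    (B : LinearMap.BilinForm ℝ (MvPolynomial (Fin k) ℝ))
    (hBsymm : ∀ f g, B f g = B g f)
    (hBpos : ∀ f ∈ symDegLE k n, f ≠ 0 → 0 < B f f)
    (E E' : Fin N → Polynomial ℝ)
    (hdeg : ∀ α, (E α).natDegree = n) (hdeg' : ∀ α, (E' α).natDegree = n)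
    (hind : LinearIndependent ℝ (fun α : Fin N =>
      ∏ i : Fin k, Polynomial.aeval (MvPolynomial.X i : MvPolynomial (Fin k) ℝ) (E α)))
    (hspan : Submodule.span ℝ (Set.range (fun α : Fin N =>
        ∏ i : Fin k, Polynomial.aeval (MvPolynomial.X i : MvPolynomial (Fin k) ℝ) (E α))) =
      symDegLE k n ⊓ B.orthogonal (symDegLE k (n - 1)))
    (hind' : LinearIndependent ℝ (fun α : Fin N =>
      ∏ i : Fin k, Polynomial.aeval (MvPolynomial.X i : MvPolynomial (Fin k) ℝ) (E' α)))
    (hspan' : Submodule.span ℝ (Set.range (fun α : Fin N =>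
        ∏ i : Fin k, Polynomial.aeval (MvPolynomial.X i : MvPolynomial (Fin k) ℝ) (E' α))) =
      symDegLE k n ⊓ B.orthogonal (symDegLE k (n - 1))) :
    ∃ σ : Equiv.Perm (Fin N), ∀ α, ∃ c : ℝ, c ≠ 0 ∧ E' α = c • E (σ α) :=
  stmt14_general k n N B hBpos E E' hind hspan hind' hspan'
end

section
/- The map from V_n^{k-1} to the orthogonal complement (V_{n-1}^k)^perp in V_n^k, defined as the composite of m_{(mu_1,...,mu_{k-1})} -> m_{(n,mu_1,...,mu_{k-1})} followed by orthogonal projection onto (V_{n-1}^k)^perp, and the map (V_{n-1}^k)^perp -> V_n^{k-1} given by d^n/dx_k^n, witness that these two spaces have the same dimension binomial(n+k-1,k-1). -/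
/-!
Exponent vectors of monomials in `V_n^k` are tuples in `{0, …, n}^k`, and a symmetric polynomial
is determined by one coefficient per orbit of the symmetric group, i.e. per multiset of `k`
exponents; the orbit sums `m_μ` realise every choice, so `dim V_n^k = C(n + k, k)`. A bilinear
form that is anisotropic on `W = V_{n-1}^k ≤ V = V_n^k` makes `W` and `V ∩ W^⊥` complementary in
dimension, and Pascal's rule gives `dim (V ∩ W^⊥) = C(n + k - 1, k - 1)`. Finally, if
`∂^n p / ∂x_k^n = 0` then `p` has degree `< n` in `x_k`, hence by symmetry in every variable, so
`p ∈ W`; if moreover `p ⊥ W` then `B p p = 0` and `p = 0`.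
-/

open MvPolynomial

open Module Finset

namespace MvPolynomial

variable {σ R : Type*} [CommSemiring R]

theorem coeff_iterate_pderiv (i : σ) (t : ℕ) (p : MvPolynomial σ R) (m : σ →₀ ℕ) :
    coeff m ((pderiv i)^[t] p) =
      coeff (m + Finsupp.single i t) p * (m i + t).descFactorial t := by
  induction t generalizing p with
  | zero => simp
  | succ t ih =>
    rw [Function.iterate_succ_apply, ih, coeff_pderiv, add_assoc, ← Finsupp.single_add,
      ← Nat.add_assoc, Nat.succ_descFactorial_succ]
    simp only [Finsupp.add_apply, Finsupp.single_eq_same]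
    push_cast
    ring

theorem degreeOf_lt_of_iterate_pderiv_eq_zero [CharZero R] [NoZeroDivisors R] {i : σ} {t : ℕ}
    {p : MvPolynomial σ R} (ht : 0 < t) (h : (pderiv i)^[t] p = 0) : p.degreeOf i < t := by
  rw [degreeOf_lt_iff ht]
  intro m hm
  by_contra! hmt
  have hm' : m - Finsupp.single i t + Finsupp.single i t = m := tsub_add_cancel_of_le <| by
    simpa [Finsupp.single_le_iff] using hmt
  have := coeff_iterate_pderiv i t p (m - Finsupp.single i t)
  rw [h, coeff_zero, hm', eq_comm, mul_eq_zero, Nat.cast_eq_zero,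
    Nat.descFactorial_eq_zero_iff_lt] at this
  refine this.elim (mem_support_iff.mp hm) fun hlt => ?_
  simp at hlt

theorem IsSymmetric.coeff_equivMapDomain {p : MvPolynomial σ R} (hp : p.IsSymmetric)
    (e : Equiv.Perm σ) (m : σ →₀ ℕ) : coeff (m.equivMapDomain e) p = coeff m p := by
  conv_lhs => rw [← hp e]
  rw [Finsupp.equivMapDomain_eq_mapDomain, coeff_rename_mapDomain _ e.injective]

theorem IsSymmetric.degreeOf_eq_s15 {p : MvPolynomial σ R} (hp : p.IsSymmetric) (i j : σ) :
    p.degreeOf i = p.degreeOf j := by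
  classical
  have h := degreeOf_rename_of_injective (p := p) (Equiv.swap i j).injective j
  rwa [hp, Equiv.swap_apply_right] at h

end MvPolynomial

namespace LinearMap.BilinForm

variable {K M : Type*} [Field K] [AddCommGroup M] [Module K M]

theorem finrank_inf_orthogonal_add_finrank (B : LinearMap.BilinForm K M) {V W : Submodule K M}
    [FiniteDimensional K V] (hWV : W ≤ V) (hW : ∀ w ∈ W, B w w = 0 → w = 0) :
    finrank K ↥(V ⊓ B.orthogonal W) + finrank K W = finrank K V := by
  set W' := W.comap V.subtype
  have hker : W' ⊓ LinearMap.ker (B.restrict V) = ⊥ := by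
    refine (Submodule.eq_bot_iff _).mpr fun x ⟨hxW, hxB⟩ => Subtype.ext (hW x hxW ?_)
    exact LinearMap.congr_fun hxB x
  have horth : (B.restrict V).orthogonal W' = (V ⊓ B.orthogonal W).comap V.subtype := by
    ext v
    simp only [mem_orthogonal_iff, Submodule.mem_comap, Submodule.mem_inf, Submodule.coe_subtype,
      v.2, true_and, W', restrict_apply, Subtype.forall]
    exact ⟨fun h w hw => h w (hWV hw) hw, fun h w _ hw => h w hw⟩
  have := finrank_add_finrank_orthogonal' (B := B.restrict V) W'
  rw [hker, finrank_bot, add_zero, horth, (Submodule.comapSubtypeEquivOfLe hWV).finrank_eq,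
    (Submodule.comapSubtypeEquivOfLe inf_le_left).finrank_eq] at this
  omega

end LinearMap.BilinForm

namespace Sym

variable {α : Type*} {k : ℕ}

def ofFn (d : Fin k → α) : Sym α k := ⟨List.ofFn d, by simp⟩

theorem ofFn_comp_perm (d : Fin k → α) (σ : Equiv.Perm (Fin k)) : ofFn (d ∘ σ) = ofFn d :=
  Subtype.ext <| Multiset.coe_eq_coe.mpr (σ.ofFn_comp_perm d)

theorem ofFn_surjective : Function.Surjective (ofFn : (Fin k → α) → Sym α k) := by
  rintro ⟨s, hs⟩
  refine ⟨fun i => s.toList.get (i.cast (by simp [hs])), Subtype.ext ?_⟩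
  change ((List.ofFn _ : List α) : Multiset α) = s
  conv_rhs => rw [← s.coe_toList]
  exact congrArg _ <| List.ext_get (by simp [hs]) (by simp)

theorem exists_perm_of_ofFn_eq [LinearOrder α] {d d' : Fin k → α} (h : ofFn d = ofFn d') :
    ∃ σ : Equiv.Perm (Fin k), d = d' ∘ σ := by
  have hperm : (List.ofFn (d ∘ Tuple.sort d)).Perm (List.ofFn (d' ∘ Tuple.sort d')) :=
    ((Tuple.sort d).ofFn_comp_perm d).trans <|
      (Multiset.coe_eq_coe.mp (congrArg Subtype.val h)).trans
        ((Tuple.sort d').ofFn_comp_perm d').symm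
  have hsorted : d ∘ Tuple.sort d = d' ∘ Tuple.sort d' :=
    List.ofFn_injective <| hperm.eq_of_sortedLE
      (Tuple.monotone_sort d).sortedLE_ofFn (Tuple.monotone_sort d').sortedLE_ofFn
  refine ⟨(Tuple.sort d)⁻¹.trans (Tuple.sort d'), funext fun i => ?_⟩
  simpa using congrFun hsorted ((Tuple.sort d)⁻¹ i)

end Sym

section SymDegLE

variable {k n : ℕ}

theorem symDegLE_mono {m : ℕ} (h : m ≤ n) : symDegLE k m ≤ symDegLE k n :=
  fun _ hp => ⟨hp.1, fun i => (hp.2 i).trans h⟩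

theorem coeff_eq_zero_of_mem_symDegLE {p : MvPolynomial (Fin k) ℝ} (hp : p ∈ symDegLE k n)
    {m : Fin k →₀ ℕ} {i : Fin k} (h : n < m i) : coeff m p = 0 :=
  notMem_support_iff.mp fun hm => h.not_ge (degreeOf_le_iff.mp (hp.2 i) m hm)

noncomputable def tupleExponent (d : Fin k → Fin (n + 1)) : Fin k →₀ ℕ :=
  Finsupp.equivFunOnFinite.symm (Fin.val ∘ d)

theorem tupleExponent_injective : Function.Injective (tupleExponent (k := k) (n := n)) :=
  fun _ _ h => funext fun i => Fin.ext (DFunLike.congr_fun h i)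

theorem tupleExponent_comp_perm (d : Fin k → Fin (n + 1)) (σ : Equiv.Perm (Fin k)) :
    tupleExponent (d ∘ σ) = (tupleExponent d).equivMapDomain σ.symm := by
  ext i
  simp [tupleExponent]

theorem exists_tupleExponent_eq {m : Fin k →₀ ℕ} (h : ∀ i, m i ≤ n) :
    ∃ d : Fin k → Fin (n + 1), tupleExponent d = m :=
  ⟨fun i => ⟨m i, Nat.lt_succ_of_le (h i)⟩, by ext i; simp [tupleExponent]⟩

theorem MvPolynomial.IsSymmetric.coeff_tupleExponent_eq {p : MvPolynomial (Fin k) ℝ}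
    (hp : p.IsSymmetric) {d d' : Fin k → Fin (n + 1)} (h : Sym.ofFn d = Sym.ofFn d') :
    coeff (tupleExponent d) p = coeff (tupleExponent d') p := by
  obtain ⟨σ, rfl⟩ := Sym.exists_perm_of_ofFn_eq h
  rw [tupleExponent_comp_perm, hp.coeff_equivMapDomain]

/-- The paper's `m_μ`, for `μ` padded with zeros to `k` parts, each at most `n`. -/
noncomputable def orbitSum (s : Sym (Fin (n + 1)) k) : MvPolynomial (Fin k) ℝ :=
  ∑ d with Sym.ofFn d = s, monomial (tupleExponent d) 1

theorem coeff_tupleExponent_orbitSum (s : Sym (Fin (n + 1)) k) (d : Fin k → Fin (n + 1)) :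
    coeff (tupleExponent d) (orbitSum s) = if Sym.ofFn d = s then 1 else 0 := by
  simp [orbitSum, coeff_sum, coeff_monomial, tupleExponent_injective.eq_iff]

theorem orbitSum_mem_symDegLE (s : Sym (Fin (n + 1)) k) : orbitSum s ∈ symDegLE k n := by
  refine ⟨fun σ => ?_, fun i => degreeOf_le_iff.mpr fun m hm => ?_⟩
  · rw [orbitSum, map_sum]
    refine Finset.sum_nbij' (· ∘ σ.symm) (· ∘ σ) (fun d => by simp [Sym.ofFn_comp_perm])
      (fun d => by simp [Sym.ofFn_comp_perm]) (fun d _ => by simp [Function.comp_assoc])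
      (fun d _ => by simp [Function.comp_assoc]) (fun d _ => ?_)
    rw [rename_monomial, tupleExponent_comp_perm, Equiv.symm_symm,
      Finsupp.equivMapDomain_eq_mapDomain]
  · obtain ⟨d, -, hd⟩ := Finset.mem_biUnion.mp (support_sum hm)
    rw [Finset.mem_singleton.mp (support_monomial_subset hd)]
    exact Fin.is_le (d i)

noncomputable def orbitCoeffs : symDegLE k n →ₗ[ℝ] (Sym (Fin (n + 1)) k → ℝ) :=
  LinearMap.pi fun s =>
    lcoeff ℝ (tupleExponent (Function.surjInv Sym.ofFn_surjective s)) ∘ₗ (symDegLE k n).subtype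

theorem orbitCoeffs_bijective : Function.Bijective (orbitCoeffs (k := k) (n := n)) := by
  refine ⟨(injective_iff_map_eq_zero _).mpr fun p hp =>
    Subtype.ext <| MvPolynomial.ext _ _ fun m => ?_, fun c => ?_⟩
  · by_cases hm : ∀ i, m i ≤ n
    · obtain ⟨d, rfl⟩ := exists_tupleExponent_eq hm
      rw [p.2.1.coeff_tupleExponent_eq (Function.surjInv_eq Sym.ofFn_surjective _).symm]
      exact congrFun hp (Sym.ofFn d)
    · obtain ⟨i, hi⟩ := not_forall.mp hm
      rw [not_le] at hi
      exact coeff_eq_zero_of_mem_symDegLE p.2 hi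
  · refine ⟨⟨∑ s, c s • orbitSum s, sum_mem fun s _ => Submodule.smul_mem _ _
      (orbitSum_mem_symDegLE s)⟩, funext fun s => ?_⟩
    simp [orbitCoeffs, coeff_tupleExponent_orbitSum, Function.surjInv_eq]

instance : FiniteDimensional ℝ (symDegLE k n) :=
  Module.Finite.of_injective _ orbitCoeffs_bijective.1

theorem finrank_symDegLE : finrank ℝ (symDegLE k n) = (n + k).choose k := by
  rw [(LinearEquiv.ofBijective _ orbitCoeffs_bijective).finrank_eq, finrank_fintype_fun_eq_card,
    Sym.card_sym_eq_choose, Fintype.card_fin, Nat.add_right_comm, Nat.add_sub_cancel]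

theorem mem_symDegLE_pred_of_iterate_pderiv_eq_zero (hn : 0 < n) {p : MvPolynomial (Fin k) ℝ}
    (hp : p ∈ symDegLE k n) {i : Fin k} (h : (pderiv i)^[n] p = 0) : p ∈ symDegLE k (n - 1) :=
  ⟨hp.1, fun j => by
    have := degreeOf_lt_of_iterate_pderiv_eq_zero hn h
    rw [hp.1.degreeOf_eq_s15 j i]
    omega⟩

variable (B : LinearMap.BilinForm ℝ (MvPolynomial (Fin k) ℝ))

theorem finrank_symDegLE_inf_orthogonal (hk : 1 ≤ k) (hn : 1 ≤ n)
    (hB : ∀ f ∈ symDegLE k (n - 1), B f f = 0 → f = 0) :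
    finrank ℝ ↥(symDegLE k n ⊓ B.orthogonal (symDegLE k (n - 1))) =
      (n + k - 1).choose (k - 1) := by
  have pascal : (n + k).choose k = (n + k - 1).choose (k - 1) + (n - 1 + k).choose k := by
    obtain ⟨m, rfl⟩ : ∃ m, n = m + 1 := ⟨n - 1, by omega⟩
    obtain ⟨j, rfl⟩ : ∃ j, k = j + 1 := ⟨k - 1, by omega⟩
    simpa [Nat.add_right_comm, ← Nat.add_assoc] using Nat.choose_succ_succ' (m + j + 1) j
  have := B.finrank_inf_orthogonal_add_finrank (symDegLE_mono (Nat.sub_le n 1)) hB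
  rw [finrank_symDegLE, finrank_symDegLE, pascal] at this
  omega

theorem injOn_iterate_pderiv_symDegLE_inf_orthogonal (hn : 1 ≤ n)
    (hB : ∀ f ∈ symDegLE k (n - 1), B f f = 0 → f = 0) (i : Fin k) :
    Set.InjOn (pderiv i)^[n]
      (symDegLE k n ⊓ B.orthogonal (symDegLE k (n - 1)) : Set (MvPolynomial (Fin k) ℝ)) := by
  rw [← Derivation.coeFn_coe, ← Module.End.coe_pow]
  refine LinearMap.injOn_of_disjoint_ker (p := symDegLE k n ⊓ B.orthogonal (symDegLE k (n - 1)))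
    subset_rfl (Submodule.disjoint_def.mpr fun p hp hker => ?_)
  rw [LinearMap.mem_ker, Module.End.coe_pow, Derivation.coeFn_coe] at hker
  have hW := mem_symDegLE_pred_of_iterate_pderiv_eq_zero hn hp.1 hker
  exact hB p hW (hp.2 p hW)

end SymDegLE

theorem stmt15 (k n : ℕ) (hk : 1 ≤ k) (hn : 1 ≤ n)
    (B : LinearMap.BilinForm ℝ (MvPolynomial (Fin k) ℝ))
    (hBpos : ∀ f ∈ symDegLE k n, f ≠ 0 → 0 < B f f) :
    Module.finrank ℝ ↥(symDegLE (k - 1) n) = (n + k - 1).choose (k - 1) ∧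
    Module.finrank ℝ ↥(symDegLE k n ⊓ B.orthogonal (symDegLE k (n - 1))) =
      (n + k - 1).choose (k - 1) ∧
    Set.InjOn (fun p : MvPolynomial (Fin k) ℝ =>
        (⇑(MvPolynomial.pderiv (⟨k - 1, by omega⟩ : Fin k)))^[n] p)
      ↑(symDegLE k n ⊓ B.orthogonal (symDegLE k (n - 1))) := by
  have hB : ∀ f ∈ symDegLE k (n - 1), B f f = 0 → f = 0 := fun f hf hff =>
    by_contra fun hf0 => (hBpos f (symDegLE_mono (Nat.sub_le n 1) hf) hf0).ne' hff
  refine ⟨?_, finrank_symDegLE_inf_orthogonal B hk hn hB,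
    injOn_iterate_pderiv_symDegLE_inf_orthogonal B hn hB _⟩
  rw [finrank_symDegLE, Nat.add_sub_assoc hk]
end
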